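/- Let P be a finite connected poset with n = |P|. If T is a collection of proper tubes that is not a proper tubing (some pair is neither nested nor disjoint, or the relation ≺ on disjoint tubes has a cycle), then the intersection of the hyperplanes H_τ = {α_τ = n^{2|τ|}} over τ ∈ T with the polytope 𝒜(P) = ∩_{σ proper tube} h_σ ∩ H_P is empty. -/

import Mathlib

open Finset

section Defs
variable {α : Type*} [Fintype α] [PartialOrder α] [DecidableEq α]

/-- `τ` is connected as an induced subgraph of the Hasse diagram of the poset. -/
def IsConnectedIn (τ : Finset α) : Prop :=
  ∀ a ∈ τ, ∀ b ∈ τ,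
    Relation.ReflTransGen (fun x y => x ∈ τ ∧ y ∈ τ ∧ (x ⋖ y ∨ y ⋖ x)) a b

/-- `τ` is (order-)convex. -/
def IsConvexIn (τ : Finset α) : Prop :=
  ∀ a ∈ τ, ∀ c ∈ τ, ∀ b, a ≤ b → b ≤ c → b ∈ τ

/-- A tube: connected, convex, of size at least 2. -/
def IsTube (τ : Finset α) : Prop :=
  IsConnectedIn τ ∧ IsConvexIn τ ∧ 2 ≤ τ.card

/-- A proper tube additionally has at most `|P| - 1` elements. -/
def IsProperTube (τ : Finset α) : Prop :=
  IsTube τ ∧ τ.card ≤ Fintype.card α - 1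

open Classical in
/-- `α_τ(p) = Σ_{i ⋖ j, i,j ∈ τ} (p j - p i)`, over covering relations inside `τ`. -/
noncomputable def alphaF (τ : Finset α) (p : α → ℝ) : ℝ :=
  ∑ i ∈ τ, ∑ j ∈ τ, if i ⋖ j then p j - p i else 0

/-- `diam_S(p) = max_{i,j ∈ S} |p i - p j|`. -/
noncomputable def diamF (S : Finset α) (p : α → ℝ) : ℝ :=
  if h : (S ×ˢ S).Nonempty then (S ×ˢ S).sup' h fun ij => |p ij.1 - p ij.2| else 0

open Classical in
/-- `conv S = {b : ∃ a c ∈ S, a ≤ b ≤ c}`. -/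
noncomputable def convF (S : Finset α) : Finset α :=
  univ.filter fun b => ∃ a ∈ S, ∃ c ∈ S, a ≤ b ∧ b ≤ c

/-- The relation `σ ≺ τ` on disjoint tubes of a tubing. -/
def TubingRel (T : Finset (Finset α)) (σ τ : Finset α) : Prop :=
  σ ∈ T ∧ τ ∈ T ∧ (∀ x ∈ σ, x ∉ τ) ∧ ∃ a ∈ σ, ∃ b ∈ τ, a < b

/-- A proper tubing: proper tubes, pairwise nested or disjoint, with acyclic `≺`. -/
def IsProperTubing (T : Finset (Finset α)) : Prop :=
  (∀ τ ∈ T, IsProperTube τ) ∧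
  (∀ σ ∈ T, ∀ τ ∈ T, σ ⊆ τ ∨ τ ⊆ σ ∨ ∀ x ∈ σ, x ∉ τ) ∧
  ∀ τ ∈ T, ¬ Relation.TransGen (TubingRel T) τ τ

/-- A maximal proper tubing. -/
def IsMaximalTubing (T : Finset (Finset α)) : Prop :=
  IsProperTubing T ∧ ∀ T', IsProperTubing T' → T ⊆ T' → T = T'

end Defs

/-!
Let `p` be a point of `⋂_{τ ∈ T} H_τ ∩ 𝒜(P)` and `X = n`. The inequality for a two-element tube
`{i, j}` with `i ⋖ j` makes `p` monotone. Then `α_S(p)` bounds the spread of `p` on any connected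
`S`: every level between two values of `p` on `S` is crossed by a covering edge inside `S`, so the
spread is at most the total length of these edges.

If two tubes of `T` cross, or if `T` has a `≺`-cycle, let `U` be the convex hull of the union of the
two tubes, resp. of all tubes on a closed `≺`-walk through a given one. Then `U` is a tube with at
least `m + 1`, resp. `m + 2`, elements, where `m` is the largest size of the tubes involved, and `p`
spreads on `U` by at most `2 X^{2m}`, resp. `binom(X, 2) X^{2m}`. As `α_U(p)` is `α` of one of
the tubes plus at most `binom(X, 2)` covering edges, each bounded by the spread, this gives
`α_U(p) < X^{2|U|}`, contradicting the inequality for `U`.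
-/

open Finset Relation MeasureTheory

lemma sub_le_sum_of_forall_mem_Ico {ι : Type*} {s : Finset ι} {f g : ι → ℝ} {a b : ℝ}
    (hfg : ∀ k ∈ s, f k ≤ g k) (hcover : ∀ θ ∈ Set.Ico a b, ∃ k ∈ s, θ ∈ Set.Ico (f k) (g k)) :
    b - a ≤ ∑ k ∈ s, (g k - f k) := by
  have hsum : 0 ≤ ∑ k ∈ s, (g k - f k) := sum_nonneg fun k hk => sub_nonneg.2 (hfg k hk)
  rcases le_or_gt b a with hba | hab
  · linarith
  rw [← ENNReal.ofReal_le_ofReal_iff hsum, ENNReal.ofReal_sum_of_nonneg fun k hk =>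
    sub_nonneg.2 (hfg k hk), ← Real.volume_Ico]
  calc volume (Set.Ico a b) ≤ volume (⋃ k ∈ s, Set.Ico (f k) (g k)) :=
        measure_mono fun θ hθ => by
          obtain ⟨k, hk, hθk⟩ := hcover θ hθ
          exact Set.mem_biUnion hk hθk
    _ ≤ ∑ k ∈ s, volume (Set.Ico (f k) (g k)) := measure_biUnion_finset_le _ _
    _ = ∑ k ∈ s, ENNReal.ofReal (g k - f k) := by simp only [Real.volume_Ico]

lemma Relation.ReflTransGen.induction_along {β : Type*} {r : β → β → Prop} {P : β → Prop}
    {a b : β} (h : ReflTransGen r a b) (ha : P a)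
    (hstep : ∀ u v, ReflTransGen r a u → r u v → ReflTransGen r v b → P u → P v) : P b := by
  induction h with
  | refl => exact ha
  | tail hac hcb ih =>
    exact hstep _ _ hac hcb .refl (ih fun u v hu huv hv => hstep u v hu huv (hv.tail hcb))

/-- `x` lies on a closed `r`-walk through `τ`. -/
def OnCycleThrough {β : Type*} (r : β → β → Prop) (τ x : β) : Prop :=
  TransGen r τ x ∧ TransGen r x τ

lemma OnCycleThrough.induction {β : Type*} {r : β → β → Prop} {τ x y : β} {P : β → Prop}
    (hstep : ∀ u v, OnCycleThrough r τ u → OnCycleThrough r τ v → r u v → P u → P v)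
    (hx : OnCycleThrough r τ x) (hy : OnCycleThrough r τ y) (h : P x) : P y :=
  (hx.2.trans hy.1).to_reflTransGen.induction_along h fun u v hxu huv hvy =>
    have hvτ : TransGen r v τ := TransGen.trans_right hvy hy.2
    have hτu : TransGen r τ u := hx.1.trans_left hxu
    hstep u v ⟨hτu, .head huv hvτ⟩ ⟨hτu.tail huv, hvτ⟩ huv

section Hasse

variable {α : Type*} [PartialOrder α]

/-- The edges of the Hasse diagram of the subposet `S`. -/
def HasseAdj (S : Finset α) (x y : α) : Prop :=
  x ∈ S ∧ y ∈ S ∧ (x ⋖ y ∨ y ⋖ x)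

instance (S : Finset α) : Std.Symm (HasseAdj S) :=
  ⟨fun _ _ ⟨hx, hy, h⟩ => ⟨hy, hx, h.symm⟩⟩

lemma HasseAdj.mono {S S' : Finset α} (h : S ⊆ S') {x y : α} (hxy : HasseAdj S x y) :
    HasseAdj S' x y :=
  ⟨h hxy.1, h hxy.2.1, hxy.2.2⟩

lemma IsConnectedIn.reflTransGen_mono {S S' : Finset α} (hS : IsConnectedIn S) (h : S ⊆ S')
    {a b : α} (ha : a ∈ S) (hb : b ∈ S) : ReflTransGen (HasseAdj S') a b :=
  ReflTransGen.mono (fun _ _ => HasseAdj.mono h) a b (hS a ha b hb)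

lemma isConnectedIn_of_reflTransGen {S : Finset α} (x₀ : α)
    (h : ∀ u ∈ S, ReflTransGen (HasseAdj S) x₀ u) : IsConnectedIn S :=
  fun a ha b hb => (Std.Symm.symm _ _ (h a ha)).trans (h b hb)

variable [Fintype α]

lemma IsConvexIn.reflTransGen_hasseAdj {S : Finset α} (hS : IsConvexIn S) {a b : α}
    (ha : a ∈ S) (hb : b ∈ S) (hab : a ≤ b) : ReflTransGen (HasseAdj S) a b := by
  classical
  let := Fintype.toLocallyFiniteOrder (α := α)
  induction le_iff_reflTransGen_covBy.1 hab using ReflTransGen.head_induction_on with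
  | refl => exact .refl
  | @head x c hcov hcb ih =>
    have hcb' : c ≤ b := le_iff_reflTransGen_covBy.2 hcb
    have hc : c ∈ S := hS x ha b hb c hcov.le hcb'
    exact .head ⟨ha, hc, .inl hcov⟩ (ih hc hcb')

lemma mem_convF {S : Finset α} {b : α} : b ∈ convF S ↔ ∃ a ∈ S, ∃ c ∈ S, a ≤ b ∧ b ≤ c := by
  simp [convF]

lemma subset_convF (S : Finset α) : S ⊆ convF S :=
  fun a ha => mem_convF.2 ⟨a, ha, a, ha, le_rfl, le_rfl⟩

lemma isConvexIn_convF (S : Finset α) : IsConvexIn (convF S) := by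
  intro a ha c hc b hab hbc
  obtain ⟨a', ha', -, -, ha'a, -⟩ := mem_convF.1 ha
  obtain ⟨-, -, c', hc', -, hcc'⟩ := mem_convF.1 hc
  exact mem_convF.2 ⟨a', ha', c', hc', ha'a.trans hab, hbc.trans hcc'⟩

lemma isConnectedIn_convF {S : Finset α} (x₀ : α)
    (h : ∀ a ∈ S, ReflTransGen (HasseAdj (convF S)) x₀ a) : IsConnectedIn (convF S) := by
  refine isConnectedIn_of_reflTransGen x₀ fun u hu => ?_
  obtain ⟨a, ha, -, -, hau, -⟩ := mem_convF.1 hu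
  exact (h a ha).trans ((isConvexIn_convF S).reflTransGen_hasseAdj (subset_convF S ha) hu hau)

lemma sub_le_of_mem_convF {p : α → ℝ} (hp : Monotone p) {S : Finset α} {B : ℝ}
    (hS : ∀ x ∈ S, ∀ y ∈ S, p y - p x ≤ B) {u v : α} (hu : u ∈ convF S) (hv : v ∈ convF S) :
    p v - p u ≤ B := by
  obtain ⟨x, hx, -, -, hxu, -⟩ := mem_convF.1 hu
  obtain ⟨-, -, y, hy, -, hvy⟩ := mem_convF.1 hv
  linarith [hS x hx y hy, hp hxu, hp hvy]

end Hasse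

section Alpha

variable {α : Type*} [PartialOrder α]

open Classical in
/-- The covering relations `i ⋖ j` inside `S`, over which `alphaF S` sums. -/
noncomputable def coverPairs (S : Finset α) : Finset (α × α) :=
  (S ×ˢ S).filter fun q => q.1 ⋖ q.2

lemma mem_coverPairs {S : Finset α} {q : α × α} :
    q ∈ coverPairs S ↔ q.1 ∈ S ∧ q.2 ∈ S ∧ q.1 ⋖ q.2 := by
  simp [coverPairs, and_assoc]

lemma coverPairs_mono {S S' : Finset α} (h : S ⊆ S') : coverPairs S ⊆ coverPairs S' :=
  fun _ hq => let hq := mem_coverPairs.1 hq; mem_coverPairs.2 ⟨h hq.1, h hq.2.1, hq.2.2⟩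

lemma alphaF_eq_sum_coverPairs (S : Finset α) (p : α → ℝ) :
    alphaF S p = ∑ q ∈ coverPairs S, (p q.2 - p q.1) := by
  rw [alphaF, coverPairs, sum_filter, sum_product]

lemma alphaF_pair [DecidableEq α] {i j : α} (hij : i ⋖ j) (p : α → ℝ) :
    alphaF {i, j} p = p j - p i := by
  have hji : ¬ j ⋖ i := fun h => hij.lt.not_gt h.lt
  simp [alphaF, sum_pair hij.ne, hij, hji]

lemma isTube_pair [DecidableEq α] {i j : α} (hij : i ⋖ j) : IsTube {i, j} := by
  refine ⟨?_, ?_, (card_pair hij.ne).ge⟩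
  · refine isConnectedIn_of_reflTransGen i fun u hu => ?_
    rcases mem_insert.1 hu with rfl | hu
    · exact .refl
    · rw [mem_singleton.1 hu]
      exact .single ⟨by simp, by simp, .inl hij⟩
  · intro a ha c hc b hab hbc
    simp only [mem_insert, mem_singleton] at ha hc ⊢
    rcases ha with rfl | rfl <;> rcases hc with rfl | rfl
    · exact .inl (le_antisymm hbc hab)
    · exact hij.eq_or_eq hab hbc
    · exact absurd (hab.trans hbc) hij.lt.not_ge
    · exact .inr (le_antisymm hbc hab)

lemma exists_mem_coverPairs_of_reflTransGen {p : α → ℝ} (hp : Monotone p) {S : Finset α}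
    {a b : α} (h : ReflTransGen (HasseAdj S) a b) {θ : ℝ} (ha : p a ≤ θ) (hb : θ < p b) :
    ∃ q ∈ coverPairs S, θ ∈ Set.Ico (p q.1) (p q.2) := by
  induction h with
  | refl => exact absurd hb ha.not_gt
  | @tail c d _ hcd ih =>
    rcases lt_or_ge θ (p c) with hθc | hθc
    · exact ih hθc
    obtain ⟨hc, hd, hcov | hcov⟩ := hcd
    · exact ⟨(c, d), mem_coverPairs.2 ⟨hc, hd, hcov⟩, hθc, hb⟩
    · exact absurd (hp hcov.le) (hb.trans_le' hθc).not_ge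

lemma sub_le_alphaF {p : α → ℝ} (hp : Monotone p) {S : Finset α} {a b : α}
    (h : ReflTransGen (HasseAdj S) a b) : p b - p a ≤ alphaF S p := by
  rw [alphaF_eq_sum_coverPairs]
  exact sub_le_sum_of_forall_mem_Ico (fun q hq => hp (mem_coverPairs.1 hq).2.2.le)
    fun θ hθ => exists_mem_coverPairs_of_reflTransGen hp h hθ.1 hθ.2

lemma IsConnectedIn.abs_sub_le_alphaF {p : α → ℝ} (hp : Monotone p) {S : Finset α}
    (hS : IsConnectedIn S) {a b : α} (ha : a ∈ S) (hb : b ∈ S) : |p b - p a| ≤ alphaF S p :=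
  abs_sub_le_iff.2 ⟨sub_le_alphaF hp (hS a ha b hb), sub_le_alphaF hp (hS b hb a ha)⟩

variable [Fintype α]

lemma card_coverPairs_le (S : Finset α) : (coverPairs S).card ≤ (Fintype.card α).choose 2 := by
  classical
  calc (coverPairs S).card ≤ (univ.offDiag.image Sym2.mk.uncurry).card := by
        refine card_le_card_of_injOn (fun q => s(q.1, q.2)) (fun q hq => ?_) ?_
        · exact mem_image.2 ⟨q, by simpa using (mem_coverPairs.1 hq).2.2.ne, rfl⟩
        · rintro ⟨a, b⟩ hq ⟨c, d⟩ hq' he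
          have hab := (mem_coverPairs.1 hq).2.2
          have hcd := (mem_coverPairs.1 hq').2.2
          rcases Sym2.eq_iff.1 he with ⟨rfl, rfl⟩ | ⟨rfl, rfl⟩
          · rfl
          · exact absurd hab.lt hcd.lt.not_gt
    _ = (Fintype.card α).choose 2 := by rw [Sym2.card_image_offDiag, card_univ]

lemma alphaF_le_alphaF_add {p : α → ℝ} {H U : Finset α} (hHU : H ⊆ U) {B : ℝ} (hB0 : 0 ≤ B)
    (hB : ∀ q ∈ coverPairs U, p q.2 - p q.1 ≤ B) :
    alphaF U p ≤ alphaF H p + (Fintype.card α).choose 2 * B := by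
  classical
  rw [alphaF_eq_sum_coverPairs, alphaF_eq_sum_coverPairs, ← sum_sdiff (coverPairs_mono hHU),
    add_comm]
  gcongr
  calc ∑ q ∈ coverPairs U \ coverPairs H, (p q.2 - p q.1)
      ≤ (coverPairs U \ coverPairs H).card * B :=
        (sum_le_card_nsmul _ _ _ fun q hq => hB q (mem_sdiff.1 hq).1).trans_eq (nsmul_eq_mul _ _)
    _ ≤ (Fintype.card α).choose 2 * B := by
        gcongr
        exact_mod_cast (card_le_card sdiff_subset).trans (card_coverPairs_le U)

end Alpha

section Cycle

variable {α : Type*} [PartialOrder α] {T : Finset (Finset α)} {τ : Finset α}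

open Classical in
noncomputable def cycleComponent (T : Finset (Finset α)) (τ : Finset α) : Finset (Finset α) :=
  T.filter (OnCycleThrough (TubingRel T) τ)

lemma mem_cycleComponent {σ : Finset α} :
    σ ∈ cycleComponent T τ ↔ σ ∈ T ∧ OnCycleThrough (TubingRel T) τ σ := by
  simp [cycleComponent]

lemma cycleComponent_subset : cycleComponent T τ ⊆ T :=
  fun _ hσ => (mem_cycleComponent.1 hσ).1

lemma self_mem_cycleComponent (hτ : TransGen (TubingRel T) τ τ) : τ ∈ cycleComponent T τ := by
  obtain ⟨σ, hτσ, -⟩ := TransGen.head'_iff.1 hτ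
  exact mem_cycleComponent.2 ⟨hτσ.1, hτ, hτ⟩

lemma cycleComponent_induction {P : Finset α → Prop}
    (hstep : ∀ u ∈ cycleComponent T τ, ∀ v ∈ cycleComponent T τ, TubingRel T u v → P u → P v)
    {x y : Finset α} (hx : x ∈ cycleComponent T τ) (hy : y ∈ cycleComponent T τ) (h : P x) :
    P y :=
  OnCycleThrough.induction (fun u v hu hv huv => hstep u (mem_cycleComponent.2 ⟨huv.1, hu⟩) v
    (mem_cycleComponent.2 ⟨huv.2.1, hv⟩) huv) (mem_cycleComponent.1 hx).2
    (mem_cycleComponent.1 hy).2 h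

lemma exists_tubingRel_mem_cycleComponent {σ : Finset α} (hσ : σ ∈ cycleComponent T τ) :
    ∃ ρ ∈ cycleComponent T τ, TubingRel T σ ρ := by
  obtain ⟨-, hτσ, hστ⟩ := mem_cycleComponent.1 hσ
  obtain ⟨ρ, hσρ, hρσ⟩ := TransGen.head'_iff.1 (hστ.trans hτσ)
  exact ⟨ρ, mem_cycleComponent.2 ⟨hσρ.2.1, hτσ.tail hσρ, TransGen.trans_right hρσ hστ⟩, hσρ⟩

variable [DecidableEq α]

lemma sub_le_sum_coverPairs_cycleComponent {p : α → ℝ} (hp : Monotone p)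
    (hT : ∀ σ ∈ T, IsConnectedIn σ) {x y : α} (hx : x ∈ (cycleComponent T τ).biUnion id)
    (hy : y ∈ (cycleComponent T τ).biUnion id) :
    p y - p x ≤ ∑ q ∈ (cycleComponent T τ).biUnion coverPairs, (p q.2 - p q.1) := by
  refine sub_le_sum_of_forall_mem_Ico (fun q hq => ?_) fun θ hθ => ?_
  · obtain ⟨ρ, -, hq⟩ := mem_biUnion.1 hq
    exact hp (mem_coverPairs.1 hq).2.2.le
  obtain ⟨ρx, hρx, hx⟩ := mem_biUnion.1 hx
  obtain ⟨ρy, hρy, hy⟩ := mem_biUnion.1 hy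
  -- If no edge crosses the level `θ`, lying above `θ` passes from a tube of the component to its
  -- `≺`-successors, hence from the tube of `y` to that of `x`.
  by_contra! hno
  have habove : ∀ ρ ∈ cycleComponent T τ, ∀ b ∈ ρ, θ < p b → ∀ z ∈ ρ, θ < p z := by
    intro ρ hρ b hb hθb z hz
    by_contra! hzθ
    obtain ⟨q, hq, hθq⟩ := exists_mem_coverPairs_of_reflTransGen hp
      (hT ρ (cycleComponent_subset hρ) z hz b hb) hzθ hθb
    exact hno q (mem_biUnion.2 ⟨ρ, hρ, hq⟩) hθq
  have hstep : ∀ u ∈ cycleComponent T τ, ∀ v ∈ cycleComponent T τ, TubingRel T u v →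
      (∀ z ∈ u, θ < p z) → ∀ z ∈ v, θ < p z := by
    rintro u - v hv ⟨-, -, -, b, hb, c, hc, hbc⟩ hu
    exact habove v hv c hc ((hu b hb).trans_le (hp hbc.le))
  exact (cycleComponent_induction hstep hρy hρx (habove ρy hρy y hy hθ.2) x hx).not_ge hθ.1

variable [Fintype α]

lemma isConnectedIn_convF_cycleComponent (hT : ∀ σ ∈ T, IsConnectedIn σ)
    (hτ : TransGen (TubingRel T) τ τ) :
    IsConnectedIn (convF ((cycleComponent T τ).biUnion id)) := by
  set S := (cycleComponent T τ).biUnion id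
  have hρS : ∀ ρ ∈ cycleComponent T τ, ρ ⊆ convF S :=
    fun ρ hρ => (subset_biUnion_of_mem id hρ).trans (subset_convF S)
  have hτC := self_mem_cycleComponent hτ
  obtain ⟨-, ⟨-, -, -, x₀, hx₀, -⟩, -⟩ := TransGen.head'_iff.1 hτ
  refine isConnectedIn_convF x₀ fun a ha => ?_
  obtain ⟨ρ, hρ, ha⟩ := mem_biUnion.1 ha
  refine cycleComponent_induction (P := fun ρ => ∀ a ∈ ρ, ReflTransGen (HasseAdj (convF S)) x₀ a)
    ?_ hτC hρ (fun a ha => (hT τ (cycleComponent_subset hτC)).reflTransGen_mono (hρS τ hτC) hx₀ ha)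
    a ha
  rintro u hu v hv ⟨-, -, -, b, hb, c, hc, hbc⟩ hxu y hy
  exact ((hxu b hb).trans ((isConvexIn_convF S).reflTransGen_hasseAdj (hρS u hu hb)
    (hρS v hv hc) hbc.le)).trans
    ((hT v (cycleComponent_subset hv)).reflTransGen_mono (hρS v hv) hc hy)

lemma sub_le_choose_mul_of_mem_cycleComponent {p : α → ℝ} (hp : Monotone p)
    (hT : ∀ σ ∈ T, IsConnectedIn σ) {B : ℝ} (hB : ∀ σ ∈ cycleComponent T τ, alphaF σ p ≤ B)
    {x y : α} (hx : x ∈ (cycleComponent T τ).biUnion id)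
    (hy : y ∈ (cycleComponent T τ).biUnion id) :
    p y - p x ≤ (Fintype.card α).choose 2 * B := by
  obtain ⟨ρ, hρ, hxρ⟩ := mem_biUnion.1 hx
  have hB0 : 0 ≤ B := by
    simpa using (sub_le_alphaF hp (ReflTransGen.refl (r := HasseAdj ρ) (a := x))).trans (hB ρ hρ)
  calc p y - p x ≤ ∑ q ∈ (cycleComponent T τ).biUnion coverPairs, (p q.2 - p q.1) :=
        sub_le_sum_coverPairs_cycleComponent hp hT hx hy
    _ ≤ ((cycleComponent T τ).biUnion coverPairs).card * B := by
        rw [← nsmul_eq_mul]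
        refine sum_le_card_nsmul _ _ _ fun q hq => ?_
        obtain ⟨ρ, hρ, hq⟩ := mem_biUnion.1 hq
        obtain ⟨h1, h2, hcov⟩ := mem_coverPairs.1 hq
        exact (sub_le_alphaF hp (.single ⟨h1, h2, .inl hcov⟩)).trans (hB ρ hρ)
    _ ≤ (Fintype.card α).choose 2 * B := by
        gcongr
        exact_mod_cast (card_le_card (biUnion_subset.2 fun ρ _ => coverPairs_mono
          (subset_univ ρ))).trans (card_coverPairs_le univ)

lemma add_two_le_card_convF_cycleComponent (hT : ∀ σ ∈ T, 2 ≤ σ.card) {H : Finset α}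
    (hH : H ∈ cycleComponent T τ) :
    H.card + 2 ≤ (convF ((cycleComponent T τ).biUnion id)).card := by
  obtain ⟨σ, hσ, hHσ⟩ := exists_tubingRel_mem_cycleComponent hH
  have hHσS : H ∪ σ ⊆ convF ((cycleComponent T τ).biUnion id) :=
    (union_subset (subset_biUnion_of_mem id hH) (subset_biUnion_of_mem id hσ)).trans
      (subset_convF _)
  have := card_le_card hHσS
  rw [card_union_of_disjoint (disjoint_left.2 hHσ.2.2.1)] at this
  have := hT σ (cycleComponent_subset hσ)
  omega

end Cycle

section Polytope

variable {α : Type*} [Fintype α] [PartialOrder α] {p : α → ℝ}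

/-- The inequalities `α_U(p) ≥ n ^ (2 |U|)` of `𝒜(P)`, here for all tubes `U`, `U = P` included. -/
def SatisfiesTubeIneqs (p : α → ℝ) : Prop :=
  ∀ U : Finset α, IsTube U → (Fintype.card α : ℝ) ^ (2 * U.card) ≤ alphaF U p

lemma satisfiesTubeIneqs_of_proper
    (huniv : (Fintype.card α : ℝ) ^ (2 * Fintype.card α) ≤ alphaF univ p)
    (hproper : ∀ σ : Finset α, IsProperTube σ →
      (Fintype.card α : ℝ) ^ (2 * σ.card) ≤ alphaF σ p) :
    SatisfiesTubeIneqs p := by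
  intro U hU
  by_cases hcard : U.card ≤ Fintype.card α - 1
  · exact hproper U ⟨hU, hcard⟩
  · rwa [eq_univ_of_card U (by have := card_le_univ U; omega), card_univ]

lemma SatisfiesTubeIneqs.monotone (hp : SatisfiesTubeIneqs p) : Monotone p := by
  classical
  let := Fintype.toLocallyFiniteOrder (α := α)
  refine (monotone_iff_forall_covBy p).2 fun i j hij => ?_
  have := hp _ (isTube_pair hij)
  rw [alphaF_pair hij] at this
  linarith [pow_nonneg (Nat.cast_nonneg (α := ℝ) (Fintype.card α)) (2 * ({i, j} : Finset α).card)]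

lemma alphaF_lt_of_spread {H U : Finset α} {m k : ℕ} {c : ℝ} (hn : 1 ≤ Fintype.card α)
    (hHU : H ⊆ U) (hH : alphaF H p ≤ (Fintype.card α : ℝ) ^ (2 * m)) (hc : 0 ≤ c)
    (hspread : ∀ u ∈ U, ∀ v ∈ U, p v - p u ≤ c * (Fintype.card α : ℝ) ^ (2 * m))
    (hcard : m + k ≤ U.card)
    (hlt : 1 + (Fintype.card α).choose 2 * c < (Fintype.card α : ℝ) ^ (2 * k)) :
    alphaF U p < (Fintype.card α : ℝ) ^ (2 * U.card) := by
  have hX : (1 : ℝ) ≤ Fintype.card α := by exact_mod_cast hn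
  set X : ℝ := (Fintype.card α : ℝ)
  have hXm : 0 < X ^ (2 * m) := by positivity
  calc alphaF U p ≤ alphaF H p + (Fintype.card α).choose 2 * (c * X ^ (2 * m)) :=
        alphaF_le_alphaF_add hHU (by positivity) fun q hq =>
          hspread _ (mem_coverPairs.1 hq).1 _ (mem_coverPairs.1 hq).2.1
    _ ≤ X ^ (2 * m) * (1 + (Fintype.card α).choose 2 * c) := by linarith
    _ < X ^ (2 * m) * X ^ (2 * k) := by gcongr
    _ ≤ X ^ (2 * U.card) := by
        rw [← pow_add]
        exact pow_le_pow_right₀ hX (by omega)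

lemma SatisfiesTubeIneqs.false_of_not_nested (hp : SatisfiesTubeIneqs p) {σ τ : Finset α}
    (hσ : IsTube σ) (hτ : IsTube τ)
    (hσp : alphaF σ p ≤ (Fintype.card α : ℝ) ^ (2 * σ.card))
    (hτp : alphaF τ p ≤ (Fintype.card α : ℝ) ^ (2 * τ.card))
    {z : α} (hzσ : z ∈ σ) (hzτ : z ∈ τ) (hστ : ¬ σ ⊆ τ) (hτσ : ¬ τ ⊆ σ) : False := by
  classical
  have hmono := hp.monotone
  have hσ2 := hσ.2.2
  have hn : 2 ≤ Fintype.card α := hσ2.trans (card_le_univ σ)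
  have hX : (2 : ℝ) ≤ Fintype.card α := by exact_mod_cast hn
  set X : ℝ := (Fintype.card α : ℝ)
  set m := max σ.card τ.card
  have hσm : alphaF σ p ≤ X ^ (2 * m) := hσp.trans (pow_le_pow_right₀ (by linarith) (by omega))
  have hτm : alphaF τ p ≤ X ^ (2 * m) := hτp.trans (pow_le_pow_right₀ (by linarith) (by omega))
  have hnear : ∀ x ∈ σ ∪ τ, |p x - p z| ≤ X ^ (2 * m) := by
    intro x hx
    rcases mem_union.1 hx with hx | hx
    · exact (hσ.1.abs_sub_le_alphaF hmono hzσ hx).trans hσm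
    · exact (hτ.1.abs_sub_le_alphaF hmono hzτ hx).trans hτm
  have hspread : ∀ x ∈ σ ∪ τ, ∀ y ∈ σ ∪ τ, p y - p x ≤ 2 * X ^ (2 * m) := fun x hx y hy => by
    linarith [abs_le.1 (hnear x hx), abs_le.1 (hnear y hy)]
  have hcard : m + 1 ≤ (convF (σ ∪ τ)).card := by
    have hU := card_le_card (subset_convF (σ ∪ τ))
    obtain ⟨u, huτ, huσ⟩ := not_subset.1 hτσ
    obtain ⟨v, hvσ, hvτ⟩ := not_subset.1 hστ
    have h1 := card_lt_card (ssubset_iff_of_subset subset_union_left |>.2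
      ⟨u, mem_union_right _ huτ, huσ⟩)
    have h2 := card_lt_card (ssubset_iff_of_subset subset_union_right |>.2
      ⟨v, mem_union_left _ hvσ, hvτ⟩)
    omega
  have hconn : IsConnectedIn (convF (σ ∪ τ)) := by
    refine isConnectedIn_convF z fun a ha => ?_
    rcases mem_union.1 ha with ha | ha
    · exact hσ.1.reflTransGen_mono (subset_union_left.trans (subset_convF _)) hzσ ha
    · exact hτ.1.reflTransGen_mono (subset_union_right.trans (subset_convF _)) hzτ ha
  refine (hp _ ⟨hconn, isConvexIn_convF _, by omega⟩).not_gt <|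
    alphaF_lt_of_spread (by omega) (subset_union_left.trans (subset_convF _)) hσm zero_le_two
      (fun u hu v hv => sub_le_of_mem_convF hmono hspread hu hv) hcard ?_
  rw [Nat.cast_choose_two]
  nlinarith

lemma SatisfiesTubeIneqs.false_of_transGen_tubingRel (hp : SatisfiesTubeIneqs p)
    {T : Finset (Finset α)}
    (hT : ∀ σ ∈ T, IsTube σ ∧ alphaF σ p ≤ (Fintype.card α : ℝ) ^ (2 * σ.card))
    {τ : Finset α} (hτ : TransGen (TubingRel T) τ τ) : False := by
  classical
  have hmono := hp.monotone
  set C := cycleComponent T τ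
  set S := C.biUnion id
  obtain ⟨H, hHC, hHmax⟩ := exists_max_image C card ⟨τ, self_mem_cycleComponent hτ⟩
  have hHT := hT H (cycleComponent_subset hHC)
  have hn : 2 ≤ Fintype.card α := hHT.1.2.2.trans (card_le_univ H)
  have hX : (2 : ℝ) ≤ Fintype.card α := by exact_mod_cast hn
  set X : ℝ := (Fintype.card α : ℝ)
  have hspread : ∀ x ∈ S, ∀ y ∈ S, p y - p x ≤ (Fintype.card α).choose 2 * X ^ (2 * H.card) :=
    fun x hx y hy => sub_le_choose_mul_of_mem_cycleComponent hmono (fun σ hσ => (hT σ hσ).1.1)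
      (fun ρ hρ => (hT ρ (cycleComponent_subset hρ)).2.trans
        (pow_le_pow_right₀ (by linarith) (by have := hHmax ρ hρ; omega))) hx hy
  have hcard : H.card + 2 ≤ (convF S).card :=
    add_two_le_card_convF_cycleComponent (fun σ hσ => (hT σ hσ).1.2.2) hHC
  have hconn : IsConnectedIn (convF S) :=
    isConnectedIn_convF_cycleComponent (fun σ hσ => (hT σ hσ).1.1) hτ
  refine (hp _ ⟨hconn, isConvexIn_convF _, by omega⟩).not_gt <|
    alphaF_lt_of_spread (by omega) ((subset_biUnion_of_mem id hHC).trans (subset_convF S)) hHT.2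
      (by positivity) (fun u hu v hv => sub_le_of_mem_convF hmono hspread hu hv) hcard ?_
  have hc : (X * (X - 1)) ^ 2 ≤ (X * X) ^ 2 := by
    gcongr
    · nlinarith
    · linarith
  rw [Nat.cast_choose_two]
  nlinarith

end Polytope

theorem incompatible_lemma_general {α : Type*} [Fintype α] [PartialOrder α]
    (T : Finset (Finset α)) (hTt : ∀ τ ∈ T, IsProperTube τ)
    (hnot : ¬ IsProperTubing T) :
    ¬ ∃ p : α → ℝ, (∑ i, p i = 0) ∧
      alphaF Finset.univ p = (Fintype.card α : ℝ) ^ (2 * Fintype.card α) ∧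
      (∀ σ : Finset α, IsProperTube σ →
        (Fintype.card α : ℝ) ^ (2 * σ.card) ≤ alphaF σ p) ∧
      ∀ τ ∈ T, alphaF τ p = (Fintype.card α : ℝ) ^ (2 * τ.card) := by
  rintro ⟨p, -, huniv, hproper, htight⟩
  have hp := satisfiesTubeIneqs_of_proper huniv.ge hproper
  have hT : ∀ τ ∈ T, IsTube τ ∧ alphaF τ p ≤ (Fintype.card α : ℝ) ^ (2 * τ.card) :=
    fun τ hτ => ⟨(hTt τ hτ).1, (htight τ hτ).le⟩
  by_cases hnested : ∀ σ ∈ T, ∀ τ ∈ T, σ ⊆ τ ∨ τ ⊆ σ ∨ ∀ x ∈ σ, x ∉ τ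
  · obtain ⟨τ, -, hτ⟩ : ∃ τ ∈ T, TransGen (TubingRel T) τ τ := by
      by_contra! hacyclic
      exact hnot ⟨hTt, hnested, hacyclic⟩
    exact hp.false_of_transGen_tubingRel hT hτ
  · push Not at hnested
    obtain ⟨σ, hσ, τ, hτ, hστ, hτσ, z, hzσ, hzτ⟩ := hnested
    exact hp.false_of_not_nested (hT σ hσ).1 (hT τ hτ).1 (hT σ hσ).2 (hT τ hτ).2 hzσ hzτ hστ hτσ

/-- if a collection `T` of proper tubes is not a proper tubing,
then `⋂_{τ ∈ T} H_τ ∩ 𝒜(P) = ∅`. -/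
theorem incompatible_lemma {α : Type*} [Fintype α] [PartialOrder α] [DecidableEq α]
    (hconn : IsConnectedIn (Finset.univ : Finset α)) (hn : 2 ≤ Fintype.card α)
    (T : Finset (Finset α)) (hTt : ∀ τ ∈ T, IsProperTube τ)
    (hnot : ¬ IsProperTubing T) :
    ¬ ∃ p : α → ℝ, (∑ i, p i = 0) ∧
      alphaF Finset.univ p = (Fintype.card α : ℝ) ^ (2 * Fintype.card α) ∧
      (∀ σ : Finset α, IsProperTube σ →
        (Fintype.card α : ℝ) ^ (2 * σ.card) ≤ alphaF σ p) ∧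
      ∀ τ ∈ T, alphaF τ p = (Fintype.card α : ℝ) ^ (2 * τ.card) :=
  incompatible_lemma_general T hTt hnot
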